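/- Let F be a 3-CNF formula with m clauses and let F′ be its GJS transformation, which has 10m clauses. Then F is satisfiable (some assignment satisfies all m clauses of F) if and only if maxsat(F′) ≥ 7m, i.e., if and only if 7/10 of the clauses of F′ can be simultaneously satisfied. -/

import Mathlib

/-- A literal: a variable together with a polarity. -/
def Lit (V : Type*) := V × Bool

/-- A literal evaluates to `σ v` if positive and `¬ σ v` if negative. -/
def litEval {V : Type*} (σ : V → Bool) (l : Lit V) : Bool :=
  if l.2 then σ l.1 else !(σ l.1)

/-- A 3-clause: a triple of literals. -/
def Clause3 (V : Type*) := Lit V × Lit V × Lit V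

/-- A 3-clause is satisfied if at least one of its literals evaluates to true. -/
def c3Eval {V : Type*} (σ : V → Bool) (c : Clause3 V) : Bool :=
  litEval σ c.1 || litEval σ c.2.1 || litEval σ c.2.2

/-- A 2-clause: a pair of literals (a unit clause is represented by a repeated literal). -/
def Clause2 (V : Type*) := Lit V × Lit V

def c2Eval {V : Type*} (σ : V → Bool) (c : Clause2 V) : Bool :=
  litEval σ c.1 || litEval σ c.2

/-- Number of clauses of the 3-CNF formula `F` satisfied by `σ`. -/
def sat3 {V : Type*} (F : List (Clause3 V)) (σ : V → Bool) : ℕ :=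
  (F.filter (fun c => c3Eval σ c)).length

/-- Number of clauses of the 2-CNF formula `F` satisfied by `σ`. -/
def sat2 {V : Type*} (F : List (Clause2 V)) (σ : V → Bool) : ℕ :=
  (F.filter (fun c => c2Eval σ c)).length

/-- The maximum number of simultaneously satisfiable clauses of a 3-CNF formula. -/
def maxsat3 {V : Type*} [Fintype V] [DecidableEq V] (F : List (Clause3 V)) : ℕ :=
  Finset.univ.sup (fun σ : V → Bool => sat3 F σ)

/-- The maximum number of simultaneously satisfiable clauses of a 2-CNF formula. -/
def maxsat2 {V : Type*} [Fintype V] [DecidableEq V] (F : List (Clause2 V)) : ℕ :=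
  Finset.univ.sup (fun σ : V → Bool => sat2 F σ)

def negLit {V : Type*} (l : Lit V) : Lit V := (l.1, !l.2)

/-- The ten GJS gadget 2-clauses for the `i`-th 3-clause `c = (ℓ₁ ∨ ℓ₂ ∨ ℓ₃)`:
`(ℓ₁), (ℓ₂), (ℓ₃), (yᵢ), (¬ℓ₁∨¬ℓ₂), (¬ℓ₂∨¬ℓ₃), (¬ℓ₁∨¬ℓ₃), (ℓ₁∨¬yᵢ), (ℓ₂∨¬yᵢ), (ℓ₃∨¬yᵢ)`. -/
def gjsGadget {V : Type*} {m : ℕ} (i : Fin m) (c : Clause3 V) :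
    List (Clause2 (V ⊕ Fin m)) :=
  let l₁ : Lit (V ⊕ Fin m) := (Sum.inl c.1.1, c.1.2)
  let l₂ : Lit (V ⊕ Fin m) := (Sum.inl c.2.1.1, c.2.1.2)
  let l₃ : Lit (V ⊕ Fin m) := (Sum.inl c.2.2.1, c.2.2.2)
  let y : Lit (V ⊕ Fin m) := (Sum.inr i, true)
  [(l₁, l₁), (l₂, l₂), (l₃, l₃), (y, y),
   (negLit l₁, negLit l₂), (negLit l₂, negLit l₃), (negLit l₁, negLit l₃),
   (l₁, negLit y), (l₂, negLit y), (l₃, negLit y)]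

/-- The GJS transformation of a 3-CNF formula: replace each clause by its ten gadget
2-clauses, over the original variables plus one fresh variable per clause. -/
def gjs {V : Type*} (F : List (Clause3 V)) : List (Clause2 (V ⊕ Fin F.length)) :=
  (List.ofFn (fun i : Fin F.length => gjsGadget i (F.get i))).flatten


/-!
Each gadget has ten clauses, at most seven of which can hold together, and seven hold exactly
when its clause of `F` is satisfied by the original variables and `yᵢ` is set to the conjunction
of the three literals. So `7m` clauses of `F′` can be satisfied iff every gadget reaches seven,
i.e. iff the restriction of the assignment to `V` satisfies `F`.
-/

def gadgetCount (b₁ b₂ b₃ y : Bool) : ℕ :=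
  [b₁, b₂, b₃, y, !b₁ || !b₂, !b₂ || !b₃, !b₁ || !b₃, b₁ || !y, b₂ || !y, b₃ || !y].count true

theorem gadgetCount_le_seven (b₁ b₂ b₃ y : Bool) : gadgetCount b₁ b₂ b₃ y ≤ 7 := by
  revert b₁ b₂ b₃ y
  decide

theorem gadgetCount_false_le_six (y : Bool) : gadgetCount false false false y ≤ 6 := by
  cases y <;> decide

theorem gadgetCount_and_eq_seven {b₁ b₂ b₃ : Bool} (h : (b₁ || b₂ || b₃) = true) :
    gadgetCount b₁ b₂ b₃ (b₁ && b₂ && b₃) = 7 := by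
  revert b₁ b₂ b₃
  decide

theorem sat2_eq_count_map {V : Type*} (F : List (Clause2 V)) (σ : V → Bool) :
    sat2 F σ = (F.map (c2Eval σ)).count true := by
  simp [sat2, List.count_eq_countP, List.countP_map, ← List.countP_eq_length_filter,
    Function.comp_def]

section Gadget

variable {V : Type*} {m : ℕ} (i : Fin m) (c : Clause3 V) (τ : V ⊕ Fin m → Bool)

theorem length_gjsGadget : (gjsGadget i c).length = 10 := rfl

theorem sat2_gjsGadget :
    sat2 (gjsGadget i c) τ =
      gadgetCount (litEval (τ ∘ Sum.inl) c.1) (litEval (τ ∘ Sum.inl) c.2.1)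
        (litEval (τ ∘ Sum.inl) c.2.2) (τ (Sum.inr i)) := by
  obtain ⟨⟨v₁, p₁⟩, ⟨v₂, p₂⟩, ⟨v₃, p₃⟩⟩ := c
  simp only [sat2_eq_count_map, gjsGadget, List.map, c2Eval, litEval, negLit, Function.comp_apply]
  generalize τ (Sum.inl v₁) = a₁, τ (Sum.inl v₂) = a₂, τ (Sum.inl v₃) = a₃, τ (Sum.inr i) = y
  revert p₁ p₂ p₃ a₁ a₂ a₃ y
  decide

theorem sat2_gjsGadget_le_seven : sat2 (gjsGadget i c) τ ≤ 7 := by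
  rw [sat2_gjsGadget]
  exact gadgetCount_le_seven _ _ _ _

theorem sat2_gjsGadget_le_six (h : c3Eval (τ ∘ Sum.inl) c = false) :
    sat2 (gjsGadget i c) τ ≤ 6 := by
  simp only [c3Eval, Bool.or_eq_false_iff] at h
  rw [sat2_gjsGadget, h.1.1, h.1.2, h.2]
  exact gadgetCount_false_le_six _

theorem sat2_gjsGadget_eq_seven {σ : V → Bool} (hτ : τ ∘ Sum.inl = σ) (h : c3Eval σ c = true)
    (hy : τ (Sum.inr i) = (litEval σ c.1 && litEval σ c.2.1 && litEval σ c.2.2)) :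
    sat2 (gjsGadget i c) τ = 7 := by
  rw [sat2_gjsGadget, hy, hτ]
  exact gadgetCount_and_eq_seven h

end Gadget

section Transformation

variable {V : Type*} (F : List (Clause3 V))

theorem length_gjs : (gjs F).length = 10 * F.length := by
  simp [gjs, List.length_flatten, List.map_ofFn, Function.comp_def, length_gjsGadget,
    mul_comm]

theorem sat2_gjs (τ : V ⊕ Fin F.length → Bool) :
    sat2 (gjs F) τ = ∑ i, sat2 (gjsGadget i (F.get i)) τ := by
  simp [sat2, gjs, List.filter_flatten, List.length_flatten, List.map_ofFn, List.sum_ofFn,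
    Function.comp_def]

theorem sat2_gjs_lt {τ : V ⊕ Fin F.length → Bool} (h : ∃ c ∈ F, c3Eval (τ ∘ Sum.inl) c = false) :
    sat2 (gjs F) τ < 7 * F.length := by
  obtain ⟨c, hc, hfalse⟩ := h
  obtain ⟨j, rfl⟩ := List.mem_iff_get.1 hc
  calc sat2 (gjs F) τ = ∑ i, sat2 (gjsGadget i (F.get i)) τ := sat2_gjs F τ
    _ < ∑ _i : Fin F.length, 7 :=
      Finset.sum_lt_sum (fun i _ ↦ sat2_gjsGadget_le_seven i _ τ)
        ⟨j, Finset.mem_univ j, (sat2_gjsGadget_le_six j _ τ hfalse).trans_lt (by norm_num)⟩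
    _ = 7 * F.length := by simp [mul_comm]

theorem exists_sat2_gjs_eq {σ : V → Bool} (hσ : ∀ c ∈ F, c3Eval σ c = true) :
    ∃ τ : V ⊕ Fin F.length → Bool, sat2 (gjs F) τ = 7 * F.length := by
  let τ : V ⊕ Fin F.length → Bool := Sum.elim σ fun i ↦
    litEval σ (F.get i).1 && litEval σ (F.get i).2.1 && litEval σ (F.get i).2.2
  refine ⟨τ, ?_⟩
  calc sat2 (gjs F) τ = ∑ i, sat2 (gjsGadget i (F.get i)) τ := sat2_gjs F τ
    _ = ∑ _i : Fin F.length, 7 :=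
      Finset.sum_congr rfl fun i _ ↦
        sat2_gjsGadget_eq_seven i _ τ rfl (hσ _ (List.get_mem F i)) rfl
    _ = 7 * F.length := by simp [mul_comm]

end Transformation

theorem le_maxsat2_iff {V : Type*} [Fintype V] [DecidableEq V] {F : List (Clause2 V)} {k : ℕ} :
    k ≤ maxsat2 F ↔ ∃ τ : V → Bool, k ≤ sat2 F τ := by
  constructor
  · intro h
    obtain ⟨τ, -, hτ⟩ := Finset.exists_mem_eq_sup Finset.univ Finset.univ_nonempty (sat2 F)
    exact ⟨τ, hτ ▸ h⟩
  · rintro ⟨τ, hτ⟩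
    exact hτ.trans (Finset.le_sup (f := sat2 F) (Finset.mem_univ τ))

theorem gjs_sat_iff {V : Type*} [Fintype V] [DecidableEq V]
    (F : List (Clause3 V)) :
    (gjs F).length = 10 * F.length ∧
    ((∃ σ : V → Bool, ∀ c ∈ F, c3Eval σ c = true) ↔
      7 * F.length ≤ maxsat2 (gjs F)) := by
  refine ⟨length_gjs F, ⟨fun ⟨σ, hσ⟩ ↦ ?_, fun h ↦ ?_⟩⟩
  · obtain ⟨τ, hτ⟩ := exists_sat2_gjs_eq F hσ
    exact le_maxsat2_iff.2 ⟨τ, hτ.ge⟩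
  · obtain ⟨τ, hτ⟩ := le_maxsat2_iff.1 h
    refine ⟨τ ∘ Sum.inl, fun c hc ↦ ?_⟩
    by_contra hfalse
    exact (sat2_gjs_lt F ⟨c, hc, Bool.eq_false_iff.2 hfalse⟩).not_ge hτ
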